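/- For the Hardy–Weinberg model with I ≥ 4 alleles (cells indexed by unordered pairs {i,j} with 1 ≤ i ≤ j ≤ I, and A x ∈ ℤ^I given by t_i = 2x_{ii} + Σ_{j ≠ i} x_{ij}, where x_{ij} = x_{ji}), let i₁, i₂, i₃, i₄ be pairwise distinct. Then the fiber of t = A(e_{i₁i₂}+e_{i₃i₄}) is exactly the three-element set {e_{i₁i₂}+e_{i₃i₄}, e_{i₁i₃}+e_{i₂i₄}, e_{i₁i₄}+e_{i₂i₃}}, and each of these three frequency vectors is an indispensable monomial. -/

import Mathlib

open scoped BigOperators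

section Defs

variable {ι κ : Type*} [Fintype ι]

/-- Embed a frequency vector `x ∈ ℕ^ι` into `ℤ^ι`. -/
def natToInt (x : ι → ℕ) : ι → ℤ := fun i => (x i : ℤ)

/-- The fiber of `t`: all frequency vectors `x` with `A x = t`. -/
def fiberOf (A : Matrix κ ι ℤ) (t : κ → ℤ) : Set (ι → ℕ) :=
  {x | A.mulVec (natToInt x) = t}

/-- A move for `A`: an integer vector in the kernel of `A`. -/
def IsMove (A : Matrix κ ι ℤ) (z : ι → ℤ) : Prop := A.mulVec z = 0

/-- The positive part `z⁺` of an integer vector, as a frequency vector. -/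
def posOf (z : ι → ℤ) : ι → ℕ := fun i => (z i).toNat

/-- The negative part `z⁻` of an integer vector, as a frequency vector. -/
def negOf (z : ι → ℤ) : ι → ℕ := fun i => (-z i).toNat

/-- The degree of a move: `deg z = |z⁺|`. -/
def degOf (z : ι → ℤ) : ℕ := ∑ i, posOf z i

/-- One step: add or subtract one move of `B`, staying in `ℕ^ι`. -/
def MStep (B : Set (ι → ℤ)) (x y : ι → ℕ) : Prop :=
  ∃ z ∈ B, natToInt y = natToInt x + z ∨ natToInt y = natToInt x - z

/-- `y` is accessible from `x` by the moves of `B` (staying nonnegative throughout,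
since all intermediate points are frequency vectors). -/
def Accessible (B : Set (ι → ℤ)) : (ι → ℕ) → (ι → ℕ) → Prop :=
  Relation.ReflTransGen (MStep B)

/-- A Markov basis: a finite set of moves such that every fiber forms a single
equivalence class for mutual accessibility. -/
def IsMarkovBasis (A : Matrix κ ι ℤ) (B : Set (ι → ℤ)) : Prop :=
  B.Finite ∧ (∀ z ∈ B, IsMove A z) ∧
    ∀ t : κ → ℤ, ∀ x ∈ fiberOf A t, ∀ y ∈ fiberOf A t, Accessible B x y

/-- A minimal Markov basis: no proper subset is a Markov basis. -/
def IsMinimalMarkovBasis (A : Matrix κ ι ℤ) (B : Set (ι → ℤ)) : Prop :=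
  IsMarkovBasis A B ∧ ∀ B' ⊂ B, ¬ IsMarkovBasis A B'

/-- An indispensable monomial: every Markov basis contains a move whose
positive or negative part is `x`. -/
def IsIndispensableMonomial (A : Matrix κ ι ℤ) (x : ι → ℕ) : Prop :=
  ∀ B : Set (ι → ℤ), IsMarkovBasis A B → ∃ z ∈ B, posOf z = x ∨ negOf z = x

/-- `B_n`: the set of moves of degree at most `n`. -/
def Bmoves (A : Matrix κ ι ℤ) (n : ℕ) : Set (ι → ℤ) :=
  {z | IsMove A z ∧ degOf z ≤ n}

/-- The sample size `|t|` of a sufficient statistic `t` (well defined on nonempty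
fibers under homogeneity). -/
noncomputable def sampleSize (A : Matrix κ ι ℤ) (t : κ → ℤ) : ℕ :=
  sInf {n | ∃ x ∈ fiberOf A t, ∑ i, x i = n}

/-- The `B_{|t|-1}`-equivalence classes of the fiber of `t`. -/
noncomputable def fiberClasses (A : Matrix κ ι ℤ) (t : κ → ℤ) : Set (Set (ι → ℕ)) :=
  {C | ∃ x ∈ fiberOf A t,
    C = {y | y ∈ fiberOf A t ∧ Accessible (Bmoves A (sampleSize A t - 1)) x y}}

/-- Homogeneity: some rational vector `w` has `w ⬝ aᵢ = 1` for every column `aᵢ`. -/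
def IsHomogeneousMatrix [Fintype κ] (A : Matrix κ ι ℤ) : Prop :=
  ∃ w : κ → ℚ, ∀ i : ι, ∑ j, w j * (A j i : ℚ) = 1

end Defs

/-- The matrix of the Hardy–Weinberg model with `I` alleles: cells are unordered
pairs of alleles, and `(A x)_i = 2 x_{ii} + ∑_{j ≠ i} x_{ij}`. -/
def AHW (I : ℕ) : Matrix (Fin I) (Sym2 (Fin I)) ℤ :=
  fun i s => if s = Sym2.mk i i then 2 else if i ∈ s then 1 else 0

/-- The coordinate frequency vector `e_{ij}` of the cell `{i,j}`. -/
def eHW {I : ℕ} (i j : Fin I) : Sym2 (Fin I) → ℕ := Pi.single (Sym2.mk i j) 1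

/-!
Every column of the Hardy–Weinberg matrix sums to 2, so a sample in the fiber of
`t = A(e_{ab} + e_{cd})` has size 2. Since `t` is the indicator of `{a,b,c,d}`, each of these
alleles lies in exactly one cell of the sample and no other allele occurs: the sample is one of the
three perfect matchings of `{a,b,c,d}`. Distinct matchings share no cell, and a point of a fiber
whose support is disjoint from that of every other point is indispensable.
-/

open Matrix

theorem Relation.ReflTransGen.exists_ne_of_ne {α : Type*} {r : α → α → Prop} {a b : α}
    (h : Relation.ReflTransGen r a b) (hne : b ≠ a) : ∃ c, r a c ∧ c ≠ a := by
  induction h using Relation.ReflTransGen.head_induction_on with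
  | refl => exact absurd rfl hne
  | @head a' c hac _ ih =>
    by_cases hca : c = a'
    · subst hca; exact ih hne
    · exact ⟨c, hac, hca⟩

theorem eq_single_add_single_of_sum_eq_two {ι : Type*} [Fintype ι] [DecidableEq ι]
    {x : ι → ℕ} {p q : ι} (hpq : p ≠ q) (hp : x p ≠ 0) (hq : x q ≠ 0)
    (hsum : ∑ s, x s = 2) : x = Pi.single p 1 + Pi.single q 1 := by
  have hle : ∀ s ∈ Finset.univ, (Pi.single p 1 + Pi.single q 1 : ι → ℕ) s ≤ x s := by
    intro s _
    by_cases hsp : s = p <;> by_cases hsq : s = q <;> simp_all <;> omega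
  have hsum' : ∑ s, (Pi.single p 1 + Pi.single q 1 : ι → ℕ) s = ∑ s, x s := by
    simp [Finset.sum_add_distrib, hsum]
  funext s
  exact ((Finset.sum_eq_sum_iff_of_le hle).mp hsum' s (Finset.mem_univ s)).symm

section Markov

variable {ι κ : Type*}

theorem natToInt_add (x y : ι → ℕ) : natToInt (x + y) = natToInt x + natToInt y := by
  ext i; simp [natToInt]

theorem negOf_natToInt_sub {x y : ι → ℕ} (hdisj : ∀ s, x s ≠ 0 → y s = 0) :
    negOf (natToInt y - natToInt x) = x := by
  ext s; have := hdisj s; simp only [negOf, natToInt, Pi.sub_apply]; omega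

theorem posOf_natToInt_sub {x y : ι → ℕ} (hdisj : ∀ s, x s ≠ 0 → y s = 0) :
    posOf (natToInt x - natToInt y) = x := by
  ext s; have := hdisj s; simp only [posOf, natToInt, Pi.sub_apply]; omega

variable [Fintype ι]

theorem mulVec_natToInt_apply (A : Matrix κ ι ℤ) (x : ι → ℕ) (i : κ) :
    (A *ᵥ natToInt x) i = ∑ s, A i s * x s := rfl

variable {A : Matrix κ ι ℤ}

theorem MStep.mem_fiberOf {B : Set (ι → ℤ)} (hB : ∀ z ∈ B, IsMove A z) {t : κ → ℤ}
    {x y : ι → ℕ} (hx : x ∈ fiberOf A t) (h : MStep B x y) : y ∈ fiberOf A t := by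
  obtain ⟨z, hz, hy | hy⟩ := h
  all_goals
    change A *ᵥ natToInt y = t
    have hz : A *ᵥ z = 0 := hB z hz
    simp [hy, mulVec_add, mulVec_sub, hx.out, hz]

/-- A walk inside the fiber that leaves `x` has a first step `x → x'` with `x' ≠ x`; as the
supports of `x` and `x'` are disjoint, the move used is `±(x' - x)`, whose negative or positive
part is `x`. -/
theorem isIndispensableMonomial_of_disjoint {t : κ → ℤ} {x y : ι → ℕ}
    (hx : x ∈ fiberOf A t) (hy : y ∈ fiberOf A t) (hyx : y ≠ x)
    (hdisj : ∀ x' ∈ fiberOf A t, x' ≠ x → ∀ s, x s ≠ 0 → x' s = 0) :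
    IsIndispensableMonomial A x := by
  rintro B ⟨-, hmoves, hconn⟩
  obtain ⟨x', hstep, hx'x⟩ := (hconn t x hx y hy).exists_ne_of_ne hyx
  have hdisj' := hdisj x' (hstep.mem_fiberOf hmoves hx) hx'x
  obtain ⟨z, hz, hadd | hsub⟩ := hstep
  · refine ⟨z, hz, Or.inr ?_⟩
    rw [show z = natToInt x' - natToInt x by rw [hadd]; abel, negOf_natToInt_sub hdisj']
  · refine ⟨z, hz, Or.inl ?_⟩
    rw [show z = natToInt x - natToInt x' by rw [hsub]; abel, posOf_natToInt_sub hdisj']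

end Markov

section HardyWeinberg

variable {I : ℕ}

theorem AHW_mk (i a b : Fin I) :
    AHW I i s(a, b) = (if i = a then 1 else 0) + (if i = b then 1 else 0) := by
  unfold AHW; split_ifs <;> simp_all

theorem AHW_nonneg (i : Fin I) (s : Sym2 (Fin I)) : 0 ≤ AHW I i s := by
  unfold AHW; split_ifs <;> norm_num

theorem AHW_eq_zero_of_notMem {i : Fin I} {s : Sym2 (Fin I)} (h : i ∉ s) : AHW I i s = 0 := by
  induction s using Sym2.ind with
  | _ a b => rw [AHW_mk]; simp_all

theorem sum_AHW (s : Sym2 (Fin I)) : ∑ i, AHW I i s = 2 := by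
  induction s using Sym2.ind with
  | _ a b => simp [AHW_mk, Finset.sum_add_distrib]

theorem sum_AHW_mulVec (x : Sym2 (Fin I) → ℕ) :
    ∑ i, (AHW I *ᵥ natToInt x) i = 2 * ∑ s, (x s : ℤ) := by
  simp_rw [mulVec_natToInt_apply]
  rw [Finset.sum_comm, Finset.mul_sum]
  simp_rw [← Finset.sum_mul, sum_AHW]

theorem AHW_mulVec_eHW (a b : Fin I) :
    AHW I *ᵥ natToInt (eHW a b) = Pi.single a 1 + Pi.single b 1 := by
  ext i
  simp [mulVec_natToInt_apply, eHW, Pi.single_apply, AHW_mk]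

theorem one_le_AHW_of_mem {i : Fin I} {s : Sym2 (Fin I)} (h : i ∈ s) : 1 ≤ AHW I i s := by
  unfold AHW; split_ifs <;> simp_all

theorem sum_AHW_mul_le_mulVec (x : Sym2 (Fin I) → ℕ) (i : Fin I) (T : Finset (Sym2 (Fin I))) :
    ∑ s ∈ T, AHW I i s * x s ≤ (AHW I *ᵥ natToInt x) i :=
  Finset.sum_le_univ_sum_of_nonneg fun s => mul_nonneg (AHW_nonneg i s) (by positivity)

theorem le_AHW_mulVec_of_mem (x : Sym2 (Fin I) → ℕ) {i : Fin I} {s : Sym2 (Fin I)}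
    (hs : i ∈ s) : (x s : ℤ) ≤ (AHW I *ᵥ natToInt x) i :=
  calc (x s : ℤ) ≤ AHW I i s * x s := le_mul_of_one_le_left (by positivity) (one_le_AHW_of_mem hs)
    _ ≤ _ := by simpa using sum_AHW_mul_le_mulVec x i {s}

theorem two_mul_le_AHW_mulVec_diag (x : Sym2 (Fin I) → ℕ) (i : Fin I) :
    2 * (x s(i, i) : ℤ) ≤ (AHW I *ᵥ natToInt x) i := by
  simpa [AHW_mk] using sum_AHW_mul_le_mulVec x i {s(i, i)}

theorem add_le_AHW_mulVec_of_mem (x : Sym2 (Fin I) → ℕ) {i : Fin I} {s s' : Sym2 (Fin I)}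
    (hs : i ∈ s) (hs' : i ∈ s') (hne : s ≠ s') :
    (x s + x s' : ℤ) ≤ (AHW I *ᵥ natToInt x) i := by
  have h := sum_AHW_mul_le_mulVec x i {s, s'}
  rw [Finset.sum_pair hne] at h
  nlinarith [one_le_AHW_of_mem hs, one_le_AHW_of_mem hs', (x s).cast_nonneg (α := ℤ),
    (x s').cast_nonneg (α := ℤ)]

end HardyWeinberg

def alleleCount {I : ℕ} (a b c d : Fin I) : Fin I → ℤ :=
  Pi.single a 1 + Pi.single b 1 + Pi.single c 1 + Pi.single d 1

section FourAlleles

variable {I : ℕ} {a b c d : Fin I}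

theorem AHW_mulVec_eHW_add (a b c d : Fin I) :
    AHW I *ᵥ natToInt (eHW a b + eHW c d) = alleleCount a b c d := by
  rw [natToInt_add, mulVec_add, AHW_mulVec_eHW, AHW_mulVec_eHW, alleleCount,
    add_assoc _ _ (Pi.single d 1)]

theorem alleleCount_apply (j : Fin I) : alleleCount a b c d j =
    (if j = a then 1 else 0) + (if j = b then 1 else 0) +
      (if j = c then 1 else 0) + (if j = d then 1 else 0) := by
  simp [alleleCount, Pi.single_apply]

theorem sum_alleleCount : ∑ j, alleleCount a b c d j = 4 := by
  simp [alleleCount_apply, Finset.sum_add_distrib]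

theorem exists_ne_zero_of_mem_fiberOf_alleleCount {x : Sym2 (Fin I) → ℕ}
    (hab : a ≠ b) (hac : a ≠ c) (had : a ≠ d) (hx : x ∈ fiberOf (AHW I) (alleleCount a b c d)) :
    ∃ j, (j = b ∨ j = c ∨ j = d) ∧ x s(a, j) ≠ 0 := by
  replace hx : AHW I *ᵥ natToInt x = alleleCount a b c d := hx
  have hta : (AHW I *ᵥ natToInt x) a = 1 := by simp [hx, alleleCount_apply, hab, hac, had]
  have hrow : ∑ s, AHW I a s * x s ≠ 0 := by rw [← mulVec_natToInt_apply, hta]; exact one_ne_zero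
  obtain ⟨s, -, hs⟩ := Finset.exists_ne_zero_of_sum_ne_zero hrow
  have has : a ∈ s := by_contra fun h => hs (by rw [AHW_eq_zero_of_notMem h, zero_mul])
  obtain ⟨j, rfl⟩ := Sym2.mem_iff_exists.mp has
  have hxj : x s(a, j) ≠ 0 := by exact_mod_cast right_ne_zero_of_mul hs
  have hja : j ≠ a := by
    rintro rfl
    have := two_mul_le_AHW_mulVec_diag x j
    omega
  have htj := le_AHW_mulVec_of_mem x (Sym2.mem_mk_right a j)
  rw [hx, alleleCount_apply] at htj
  refine ⟨j, ?_, hxj⟩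
  split_ifs at htj <;> simp_all

theorem alleleCount_swap_pairs : alleleCount a b c d = alleleCount c d a b := by
  unfold alleleCount; abel

theorem alleleCount_swap_middle : alleleCount a b c d = alleleCount a c b d := by
  unfold alleleCount; abel

theorem alleleCount_swap_right : alleleCount a b c d = alleleCount a b d c := by
  unfold alleleCount; abel

/-- The sample is a perfect matching of `{a,b,c,d}`: once `a` is paired with `b`, the partner of
`c` can only be `d`, and the sample size `|x| = 2` leaves room for nothing else. -/
theorem eq_of_mem_fiberOf_alleleCount {x : Sym2 (Fin I) → ℕ}
    (hab : a ≠ b) (hac : a ≠ c) (had : a ≠ d) (hbc : b ≠ c) (hbd : b ≠ d) (hcd : c ≠ d)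
    (hx : x ∈ fiberOf (AHW I) (alleleCount a b c d)) (hxab : x s(a, b) ≠ 0) :
    x = eHW a b + eHW c d := by
  have hx' : AHW I *ᵥ natToInt x = alleleCount a b c d := hx
  obtain ⟨j, hj, hxcj⟩ := exists_ne_zero_of_mem_fiberOf_alleleCount hcd hac.symm hbc.symm
    (alleleCount_swap_pairs (a := a) ▸ hx)
  have hxcd : x s(c, d) ≠ 0 := by
    rcases hj with rfl | rfl | rfl
    · exact hxcj
    · have := add_le_AHW_mulVec_of_mem x (Sym2.mem_mk_left j b) (Sym2.mem_mk_right c j)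
        (by rw [Ne, Sym2.eq_iff]; grind)
      simp [hx', alleleCount_apply, hab, hac, had] at this
      omega
    · have := add_le_AHW_mulVec_of_mem x (Sym2.mem_mk_right a j) (Sym2.mem_mk_right c j)
        (by rw [Ne, Sym2.eq_iff]; grind)
      simp [hx', alleleCount_apply, hab.symm, hbc, hbd] at this
      omega
  have hsum : ∑ s, x s = 2 := by
    have := sum_AHW_mulVec x
    rw [hx', sum_alleleCount] at this
    exact_mod_cast (by omega : (∑ s, x s : ℤ) = 2)
  exact eq_single_add_single_of_sum_eq_two (by rw [Ne, Sym2.eq_iff]; grind) hxab hxcd hsum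

theorem fiberOf_alleleCount
    (hab : a ≠ b) (hac : a ≠ c) (had : a ≠ d) (hbc : b ≠ c) (hbd : b ≠ d) (hcd : c ≠ d) :
    fiberOf (AHW I) (alleleCount a b c d) =
      {eHW a b + eHW c d, eHW a c + eHW b d, eHW a d + eHW b c} := by
  ext x
  constructor
  · intro hx
    obtain ⟨j, hj, hxaj⟩ := exists_ne_zero_of_mem_fiberOf_alleleCount hab hac had hx
    rcases hj with rfl | rfl | rfl
    · exact .inl (eq_of_mem_fiberOf_alleleCount hab hac had hbc hbd hcd hx hxaj)
    · exact .inr (.inl (eq_of_mem_fiberOf_alleleCount hac hab had hbc.symm hcd hbd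
        (alleleCount_swap_middle (a := a) ▸ hx) hxaj))
    · refine .inr (.inr (eq_of_mem_fiberOf_alleleCount had hab hac hbd.symm hcd.symm hbc ?_ hxaj))
      rwa [alleleCount_swap_right, alleleCount_swap_middle] at hx
  · rintro (rfl | rfl | rfl)
    · exact AHW_mulVec_eHW_add a b c d
    · exact (AHW_mulVec_eHW_add a c b d).trans alleleCount_swap_middle.symm
    · exact (AHW_mulVec_eHW_add a d b c).trans
        (alleleCount_swap_right.trans alleleCount_swap_middle).symm

theorem isIndispensableMonomial_eHW_add
    (hab : a ≠ b) (hac : a ≠ c) (had : a ≠ d) (hbc : b ≠ c) (hbd : b ≠ d) (hcd : c ≠ d) :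
    IsIndispensableMonomial (AHW I) (eHW a b + eHW c d) := by
  have hfiber := fiberOf_alleleCount hab hac had hbc hbd hcd
  have hx : eHW a b + eHW c d ∈ fiberOf (AHW I) (alleleCount a b c d) := by simp [hfiber]
  have hy : eHW a c + eHW b d ∈ fiberOf (AHW I) (alleleCount a b c d) := by simp [hfiber]
  refine isIndispensableMonomial_of_disjoint hx hy ?_ ?_
  · intro h
    have := congrFun h s(a, b)
    simp [eHW, Pi.single_apply] at this
    grind
  · intro x' hx' hne s hs
    by_contra hx's
    have hs' : s = s(a, b) ∨ s = s(c, d) := by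
      by_contra h
      simp [eHW, Pi.single_apply] at hs h
      grind
    rcases hs' with rfl | rfl
    · exact hne (eq_of_mem_fiberOf_alleleCount hab hac had hbc hbd hcd hx' hx's)
    · exact hne ((eq_of_mem_fiberOf_alleleCount hcd hac.symm hbc.symm had.symm hbd.symm hab
        (alleleCount_swap_pairs (a := a) ▸ hx') hx's).trans (add_comm _ _))

end FourAlleles

theorem three_element_fiber_HardyWeinberg_general
    {I : ℕ} (i₁ i₂ i₃ i₄ : Fin I)
    (h12 : i₁ ≠ i₂) (h13 : i₁ ≠ i₃) (h14 : i₁ ≠ i₄)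
    (h23 : i₂ ≠ i₃) (h24 : i₂ ≠ i₄) (h34 : i₃ ≠ i₄) :
    fiberOf (AHW I) ((AHW I).mulVec (natToInt (eHW i₁ i₂ + eHW i₃ i₄))) =
      {eHW i₁ i₂ + eHW i₃ i₄, eHW i₁ i₃ + eHW i₂ i₄, eHW i₁ i₄ + eHW i₂ i₃} ∧
    IsIndispensableMonomial (AHW I) (eHW i₁ i₂ + eHW i₃ i₄) ∧
    IsIndispensableMonomial (AHW I) (eHW i₁ i₃ + eHW i₂ i₄) ∧
    IsIndispensableMonomial (AHW I) (eHW i₁ i₄ + eHW i₂ i₃) := by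
  rw [AHW_mulVec_eHW_add]
  exact ⟨fiberOf_alleleCount h12 h13 h14 h23 h24 h34,
    isIndispensableMonomial_eHW_add h12 h13 h14 h23 h24 h34,
    isIndispensableMonomial_eHW_add h13 h12 h14 h23.symm h34 h24,
    isIndispensableMonomial_eHW_add h14 h12 h13 h24.symm h34.symm h23⟩

/-- for the Hardy–Weinberg model with `I ≥ 4` alleles and pairwise
distinct `i₁,i₂,i₃,i₄`, the fiber of `A(e_{i₁i₂}+e_{i₃i₄})` is exactly the listed
three-element set, and each of the three vectors is an indispensable monomial. -/
theorem three_element_fiber_HardyWeinberg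
    {I : ℕ} (hI : 4 ≤ I) (i₁ i₂ i₃ i₄ : Fin I)
    (h12 : i₁ ≠ i₂) (h13 : i₁ ≠ i₃) (h14 : i₁ ≠ i₄)
    (h23 : i₂ ≠ i₃) (h24 : i₂ ≠ i₄) (h34 : i₃ ≠ i₄) :
    fiberOf (AHW I) ((AHW I).mulVec (natToInt (eHW i₁ i₂ + eHW i₃ i₄))) =
      {eHW i₁ i₂ + eHW i₃ i₄, eHW i₁ i₃ + eHW i₂ i₄, eHW i₁ i₄ + eHW i₂ i₃} ∧
    IsIndispensableMonomial (AHW I) (eHW i₁ i₂ + eHW i₃ i₄) ∧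
    IsIndispensableMonomial (AHW I) (eHW i₁ i₃ + eHW i₂ i₄) ∧
    IsIndispensableMonomial (AHW I) (eHW i₁ i₄ + eHW i₂ i₃) :=
  three_element_fiber_HardyWeinberg_general i₁ i₂ i₃ i₄ h12 h13 h14 h23 h24 h34
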